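/- arXiv:2509.12349 — 6 statements merged into one kernel-verified Lean document; each statement's English description precedes it below -/
import Mathlib

section
/- Let γ > 1 and β > 0. Define a sequence of functions H_k on [0,∞) by H_1(t) = ∫_0^t e^{βs} ds and H_k(t) = ∫_0^t e^{βs} H_{k-1}(s)^γ ds for k ≥ 2. Then for all t ≥ β^{-1} log 2 and all k ≥ 1, H_k(t) ≥ (2β)^{-(1+γ+⋯+γ^{k-1})} · ∏_{j=2}^{k} ((γ^j − 1)/(γ − 1))^{-γ^{k-j}} · e^{βt(1+γ+⋯+γ^{k-1})}. -/
open Real MeasureTheory Finset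

/-! By induction on `k`, `H_k(s) ≥ D_k (e^{βs} - 1)^{1 + γ + ⋯ + γ^{k-1}}` for `s ≥ 0`, where the
constants satisfy `D_0 = 1` and `D_{k+1} = D_k^γ / (β (1 + γ + ⋯ + γ^k))`: inserting the bound for
`H_k` into the integral defining `H_{k+1}` leaves `∫_0^u e^{βs} (e^{βs} - 1)^p ds`, which is
`(e^{βu} - 1)^{p+1} / (β (p + 1))` in closed form. Unwinding the recursion gives the constant
of the statement, and `t ≥ β⁻¹ log 2` means `e^{βt} - 1 ≥ e^{βt} / 2`. -/

theorem integral_exp_mul_exp_sub_one_rpow {β p : ℝ} (hβ : β ≠ 0) (hp : 0 ≤ p) (t : ℝ) :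
    ∫ s in (0 : ℝ)..t, exp (β * s) * (exp (β * s) - 1) ^ p
      = (exp (β * t) - 1) ^ (p + 1) / (β * (p + 1)) := by
  have hp1 : 0 < p + 1 := by linarith
  have hderiv : ∀ s ∈ Set.uIcc (0 : ℝ) t,
      HasDerivAt (fun s => (exp (β * s) - 1) ^ (p + 1) / (β * (p + 1)))
        (exp (β * s) * (exp (β * s) - 1) ^ p) s := by
    intro s _
    have hinner : HasDerivAt (fun s => exp (β * s) - 1) (exp (β * s) * β) s := by
      simpa using (((hasDerivAt_id s).const_mul β).exp.sub_const 1)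
    refine ((hinner.rpow_const (p := p + 1) (Or.inr (by linarith))).div_const _).congr_deriv ?_
    rw [add_sub_cancel_right]
    field_simp
  have hcont : Continuous fun s => exp (β * s) * (exp (β * s) - 1) ^ p := by
    fun_prop (disch := exact Or.inr hp)
  rw [intervalIntegral.integral_eq_sub_of_hasDerivAt hderiv (hcont.intervalIntegrable _ _)]
  simp [zero_rpow hp1.ne']

theorem le_integral_exp_mul_rpow {β γ c p : ℝ} (hβ : 0 < β) (hγ : 0 ≤ γ) (hc : 0 ≤ c)
    (hp : 0 ≤ p) {F : ℝ → ℝ} (hF : Continuous F)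
    (hFle : ∀ s, 0 ≤ s → c * (exp (β * s) - 1) ^ p ≤ F s) {u : ℝ} (hu : 0 ≤ u) :
    c ^ γ / (β * (γ * p + 1)) * (exp (β * u) - 1) ^ (γ * p + 1)
      ≤ ∫ s in (0 : ℝ)..u, exp (β * s) * F s ^ γ := by
  have hbase : ∀ s, 0 ≤ s → 0 ≤ exp (β * s) - 1 := fun s hs => by
    linarith [one_le_exp (mul_nonneg hβ.le hs)]
  have hlow : Continuous fun s => exp (β * s) * (c * (exp (β * s) - 1) ^ p) ^ γ := by
    fun_prop (disch := exact Or.inr (by assumption))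
  have hupp : Continuous fun s => exp (β * s) * F s ^ γ := by
    fun_prop (disch := exact Or.inr hγ)
  calc c ^ γ / (β * (γ * p + 1)) * (exp (β * u) - 1) ^ (γ * p + 1)
      = ∫ s in (0 : ℝ)..u, exp (β * s) * (c * (exp (β * s) - 1) ^ p) ^ γ := by
        rw [mul_comm, ← mul_div_assoc, mul_div_right_comm, ← integral_exp_mul_exp_sub_one_rpow
          hβ.ne' (mul_nonneg hγ hp), ← intervalIntegral.integral_mul_const]
        refine intervalIntegral.integral_congr fun s hs => ?_
        have hs0 := hbase s (by rw [Set.uIcc_of_le hu] at hs; exact hs.1)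
        rw [mul_rpow hc (rpow_nonneg hs0 _), ← rpow_mul hs0, mul_comm p γ]
        ring
    _ ≤ ∫ s in (0 : ℝ)..u, exp (β * s) * F s ^ γ := by
        refine intervalIntegral.integral_mono_on hu (hlow.intervalIntegrable _ _)
          (hupp.intervalIntegrable _ _) fun s hs => ?_
        gcongr
        exacts [mul_nonneg hc (rpow_nonneg (hbase s hs.1) _), hFle s hs.1]

/-- The constants `D_k` of the lower bound `H_k(s) ≥ D_k (e^{βs} - 1)^{1 + γ + ⋯ + γ^{k-1}}`;
`D_0 = 1` corresponds to `H_0 ≡ 1`. -/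
noncomputable def lowerConst (γ β : ℝ) : ℕ → ℝ
  | 0 => 1
  | k + 1 => lowerConst γ β k ^ γ / (β * ∑ j ∈ range (k + 1), γ ^ j)

theorem lowerConst_nonneg {γ β : ℝ} (hγ : 0 ≤ γ) (hβ : 0 ≤ β) : ∀ k, 0 ≤ lowerConst γ β k
  | 0 => zero_le_one
  | k + 1 => div_nonneg (rpow_nonneg (lowerConst_nonneg hγ hβ k) _)
      (mul_nonneg hβ (sum_nonneg fun _ _ => pow_nonneg hγ _))

theorem lowerConst_eq {γ β : ℝ} (hγ : 0 ≤ γ) (hβ : 0 < β) (k : ℕ) :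
    lowerConst γ β k = β ^ (-∑ j ∈ range k, γ ^ j)
      * ∏ j ∈ Icc 2 k, (∑ i ∈ range j, γ ^ i) ^ (-(γ ^ (k - j))) := by
  induction k with
  | zero => simp [lowerConst]
  | succ k ih =>
    rcases Nat.eq_zero_or_pos k with rfl | hk
    · simp [lowerConst, rpow_neg_one]
    have hS : ∀ j ∈ Icc 2 k, 0 ≤ ∑ i ∈ range j, γ ^ i := fun j _ => by positivity
    have hprod : (∏ j ∈ Icc 2 k, (∑ i ∈ range j, γ ^ i) ^ (-(γ ^ (k - j)))) ^ γ
        = ∏ j ∈ Icc 2 k, (∑ i ∈ range j, γ ^ i) ^ (-(γ ^ (k + 1 - j))) := by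
      rw [← finsetProd_rpow _ _ fun j hj => rpow_nonneg (hS j hj) _]
      refine prod_congr rfl fun j hj => ?_
      rw [← rpow_mul (hS j hj), Nat.sub_add_comm (mem_Icc.mp hj).2, pow_succ]
      ring_nf
    have hβpow :
        β ^ (-∑ j ∈ range (k + 1), γ ^ j) = (β ^ (-∑ j ∈ range k, γ ^ j)) ^ γ * β⁻¹ := by
      rw [← rpow_mul hβ.le, ← rpow_neg_one, ← rpow_add hβ, geom_sum_succ]
      ring_nf
    rw [lowerConst, ih, mul_rpow (by positivity) (prod_nonneg fun j hj => rpow_nonneg (hS j hj) _),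
      hprod, prod_Icc_succ_top (by omega), hβpow, Nat.sub_self, pow_zero, rpow_neg_one]
    field_simp

theorem continuous_and_lowerConst_succ_mul_le {γ β : ℝ} (hγ : 0 ≤ γ) (hβ : 0 < β) {k : ℕ}
    {F : ℝ → ℝ} (hF : Continuous F ∧
      ∀ s, 0 ≤ s → lowerConst γ β k * (exp (β * s) - 1) ^ (∑ j ∈ range k, γ ^ j) ≤ F s) :
    Continuous (fun u => ∫ s in (0 : ℝ)..u, exp (β * s) * F s ^ γ) ∧
      ∀ u, 0 ≤ u → lowerConst γ β (k + 1) * (exp (β * u) - 1) ^ (∑ j ∈ range (k + 1), γ ^ j)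
        ≤ ∫ s in (0 : ℝ)..u, exp (β * s) * F s ^ γ := by
  obtain ⟨hFcont, hFle⟩ := hF
  have hcont : Continuous fun s => exp (β * s) * F s ^ γ := by
    fun_prop (disch := exact Or.inr hγ)
  refine ⟨intervalIntegral.continuous_primitive (fun _ _ => hcont.intervalIntegrable _ _) 0,
    fun u hu => ?_⟩
  rw [lowerConst, geom_sum_succ]
  exact le_integral_exp_mul_rpow hβ hγ (lowerConst_nonneg hγ hβ.le k) (by positivity) hFcont hFle hu

theorem continuous_and_lowerConst_mul_le {γ β : ℝ} (hγ : 0 ≤ γ) (hβ : 0 < β) {H : ℕ → ℝ → ℝ}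
    (hH1 : ∀ t, H 1 t = ∫ s in (0 : ℝ)..t, exp (β * s))
    (hHk : ∀ k : ℕ, 2 ≤ k → ∀ t, H k t = ∫ s in (0 : ℝ)..t, exp (β * s) * H (k - 1) s ^ γ)
    {k : ℕ} (hk : 1 ≤ k) :
    Continuous (H k) ∧
      ∀ s, 0 ≤ s → lowerConst γ β k * (exp (β * s) - 1) ^ (∑ j ∈ range k, γ ^ j) ≤ H k s := by
  induction k, hk using Nat.le_induction with
  | base =>
    have hH1' : H 1 = fun u => ∫ s in (0 : ℝ)..u, exp (β * s) * (fun _ => (1 : ℝ)) s ^ γ :=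
      funext fun u => by simp [hH1]
    rw [hH1']
    exact continuous_and_lowerConst_succ_mul_le hγ hβ ⟨continuous_const, by simp [lowerConst]⟩
  | succ k hk ih =>
    have hHk' : H (k + 1) = fun u => ∫ s in (0 : ℝ)..u, exp (β * s) * H k s ^ γ :=
      funext fun u => by simpa using hHk (k + 1) (by omega) u
    rw [hHk']
    exact continuous_and_lowerConst_succ_mul_le hγ hβ ih

theorem stmt0 (γ β : ℝ) (hγ : 1 < γ) (hβ : 0 < β)
    (H : ℕ → ℝ → ℝ)
    (hH1 : ∀ t : ℝ, H 1 t = ∫ s in (0:ℝ)..t, Real.exp (β * s))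
    (hHk : ∀ k : ℕ, 2 ≤ k → ∀ t : ℝ,
      H k t = ∫ s in (0:ℝ)..t, Real.exp (β * s) * (H (k - 1) s) ^ γ)
    (t : ℝ) (ht : β⁻¹ * Real.log 2 ≤ t) (k : ℕ) (hk : 1 ≤ k) :
    H k t ≥ (2 * β) ^ (-(∑ j ∈ Finset.range k, γ ^ j))
      * (∏ j ∈ Finset.Icc 2 k, ((γ ^ j - 1) / (γ - 1)) ^ (-(γ ^ (k - j))))
      * Real.exp (β * t * (∑ j ∈ Finset.range k, γ ^ j)) := by
  have hγ0 : 0 ≤ γ := by linarith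
  have htwo : 2 ≤ exp (β * t) := by
    calc (2 : ℝ) = exp (β * (β⁻¹ * log 2)) := by
          rw [← mul_assoc, mul_inv_cancel₀ hβ.ne', one_mul, exp_log two_pos]
      _ ≤ exp (β * t) := exp_le_exp.mpr (mul_le_mul_of_nonneg_left ht hβ.le)
  have ht0 : 0 ≤ t := le_trans (by positivity) ht
  have hprod : ∏ j ∈ Icc 2 k, ((γ ^ j - 1) / (γ - 1)) ^ (-(γ ^ (k - j)))
      = ∏ j ∈ Icc 2 k, (∑ i ∈ range j, γ ^ i) ^ (-(γ ^ (k - j))) :=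
    prod_congr rfl fun j _ => by rw [geom_sum_eq hγ.ne']
  rw [ge_iff_le, hprod, mul_rpow two_pos.le hβ.le, exp_mul]
  calc _ = lowerConst γ β k * (exp (β * t) / 2) ^ (∑ j ∈ range k, γ ^ j) := by
        rw [lowerConst_eq hγ0 hβ, div_rpow (exp_nonneg _) two_pos.le, rpow_neg two_pos.le]
        ring
    _ ≤ lowerConst γ β k * (exp (β * t) - 1) ^ (∑ j ∈ range k, γ ^ j) := by
        gcongr
        · exact lowerConst_nonneg hγ0 hβ.le k
        · linarith
    _ ≤ H k t := (continuous_and_lowerConst_mul_le hγ0 hβ hH1 hHk hk).2 t ht0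
end

section
/- Let γ > 1, β > 0, and let g : [0,∞) → [0,∞) be a function such that for every k ≥ 1 and every t ≥ β^{-1} log 2 one has g(t)^{γ^k} · (2β)^{-(γ^k−1)/(γ−1)} · ∏_{j=2}^k ((γ^j−1)/(γ−1))^{-γ^{k-j}} · e^{βt(γ^k−1)/(γ−1)} ≤ M for a fixed constant M. Then there is a constant C (depending on β, γ, M) such that g(t) ≤ C e^{-βt/(γ−1)} for all t ≥ β^{-1} log 2. -/
/-! Taking logarithms, the `k`-th bound reads
`γ^k (log g(t) - (1 - γ^{-k}) (log 2β - βt)/(γ-1) - ∑_{j=2}^k γ^{-j} log((γ^j-1)/(γ-1))) ≤ log M`.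
Dividing by `γ^k`, the sum is dominated by the convergent series `∑_j γ^{-j} log((γ^j-1)/(γ-1))`
(its terms are `O(j γ^{-j})`), the logarithm of the infinite product
`∏_{j≥2} ((γ^j-1)/(γ-1))^{γ^{-j}}`, and letting `k → ∞` kills `γ^{-k} log M`. This leaves
`log g(t) ≤ (log 2β - βt)/(γ-1) + ∑_j γ^{-j} log((γ^j-1)/(γ-1))`, with a constant independent of `M`.
-/

open Real Finset Filter Topology

section GeomQuotient

variable {γ : ℝ}

lemma one_le_geom_quot (hγ : 1 < γ) {j : ℕ} (hj : j ≠ 0) : 1 ≤ (γ ^ j - 1) / (γ - 1) := by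
  rw [one_le_div (sub_pos.2 hγ)]
  linarith [le_self_pow₀ hγ.le hj]

lemma log_geom_quot_nonneg (hγ : 1 < γ) (j : ℕ) : 0 ≤ log ((γ ^ j - 1) / (γ - 1)) := by
  rcases eq_or_ne j 0 with rfl | hj
  · simp
  · exact log_nonneg (one_le_geom_quot hγ hj)

lemma log_geom_quot_le (hγ : 1 < γ) (j : ℕ) :
    log ((γ ^ j - 1) / (γ - 1)) ≤ j * log γ + |log (γ - 1)| := by
  rcases eq_or_ne j 0 with rfl | hj
  · simp
  have hγ1 : 0 < γ - 1 := sub_pos.2 hγ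
  calc log ((γ ^ j - 1) / (γ - 1))
      ≤ log (γ ^ j / (γ - 1)) :=
        log_le_log (one_pos.trans_le (one_le_geom_quot hγ hj))
          (div_le_div_of_nonneg_right (by linarith) hγ1.le)
    _ = j * log γ - log (γ - 1) := by
        rw [log_div (by positivity) hγ1.ne', log_pow]
    _ ≤ j * log γ + |log (γ - 1)| := by linarith [neg_le_abs (log (γ - 1))]

lemma summable_inv_pow_mul_log_geom_quot (hγ : 1 < γ) :
    Summable fun j : ℕ => γ⁻¹ ^ j * log ((γ ^ j - 1) / (γ - 1)) := by
  have hγ0 : 0 < γ := one_pos.trans hγ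
  have hr : ‖γ⁻¹‖ < 1 := by
    rw [norm_inv, Real.norm_of_nonneg hγ0.le]
    exact inv_lt_one_of_one_lt₀ hγ
  have hmajorant : Summable fun j : ℕ => γ⁻¹ ^ j * (j * log γ + |log (γ - 1)|) := by
    refine (((summable_pow_mul_geometric_of_norm_lt_one 1 hr).mul_right (log γ)).add
      ((summable_geometric_of_norm_lt_one hr).mul_right |log (γ - 1)|)).congr fun j => ?_
    ring
  refine hmajorant.of_nonneg_of_le
    (fun j => mul_nonneg (by positivity) (log_geom_quot_nonneg hγ j)) fun j => ?_
  exact mul_le_mul_of_nonneg_left (log_geom_quot_le hγ j) (by positivity)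

end GeomQuotient

noncomputable def iteratedBound (γ β u t : ℝ) (k : ℕ) : ℝ :=
  u ^ (γ ^ k) * (2 * β) ^ (-((γ ^ k - 1) / (γ - 1)))
    * (∏ j ∈ Icc 2 k, ((γ ^ j - 1) / (γ - 1)) ^ (-(γ ^ (k - j))))
    * exp (β * t * (γ ^ k - 1) / (γ - 1))

section IteratedBound

variable {γ β u : ℝ}

lemma geom_quot_pos_of_mem_Icc (hγ : 1 < γ) {j k : ℕ} (hj : j ∈ Icc 2 k) :
    0 < (γ ^ j - 1) / (γ - 1) :=
  one_pos.trans_le (one_le_geom_quot hγ (by grind))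

lemma iteratedBound_pos (hγ : 1 < γ) (hβ : 0 < β) (hu : 0 < u) (t : ℝ) (k : ℕ) :
    0 < iteratedBound γ β u t k := by
  unfold iteratedBound
  have hprod := prod_pos fun j (hj : j ∈ Icc 2 k) =>
    rpow_pos_of_pos (geom_quot_pos_of_mem_Icc hγ hj) (-(γ ^ (k - j)))
  positivity

lemma log_iteratedBound (hγ : 1 < γ) (hβ : 0 < β) (hu : 0 < u) (t : ℝ) (k : ℕ) :
    log (iteratedBound γ β u t k)
      = γ ^ k * (log u - (1 - γ⁻¹ ^ k) / (γ - 1) * (log (2 * β) - β * t)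
          - ∑ j ∈ Icc 2 k, γ⁻¹ ^ j * log ((γ ^ j - 1) / (γ - 1))) := by
  have hγ0 : γ ≠ 0 := (one_pos.trans hγ).ne'
  have hb := fun j (hj : j ∈ Icc 2 k) => geom_quot_pos_of_mem_Icc hγ hj
  have hsum : ∑ j ∈ Icc 2 k, -(γ ^ (k - j)) * log ((γ ^ j - 1) / (γ - 1))
      = -(γ ^ k * ∑ j ∈ Icc 2 k, γ⁻¹ ^ j * log ((γ ^ j - 1) / (γ - 1))) := by
    rw [mul_sum, ← sum_neg_distrib]
    refine sum_congr rfl fun j hj => ?_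
    rw [pow_sub₀ γ hγ0 (mem_Icc.1 hj).2, inv_pow]
    ring
  have hprod := prod_pos fun j hj => rpow_pos_of_pos (hb j hj) (-(γ ^ (k - j)))
  unfold iteratedBound
  rw [log_mul (by positivity) (exp_pos _).ne', log_mul (by positivity) hprod.ne',
    log_mul (by positivity) (by positivity), log_exp, log_rpow hu, log_rpow (by positivity),
    log_prod fun j hj => (rpow_pos_of_pos (hb j hj) _).ne',
    sum_congr rfl fun j hj => log_rpow (hb j hj) _, hsum, inv_pow]
  field_simp
  ring

lemma log_le_of_iteratedBound_le {M t : ℝ} (hγ : 1 < γ) (hβ : 0 < β) (hu : 0 < u) {k : ℕ}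
    (h : iteratedBound γ β u t k ≤ M) :
    log u ≤ γ⁻¹ ^ k * log M + (1 - γ⁻¹ ^ k) / (γ - 1) * (log (2 * β) - β * t)
      + ∑' j : ℕ, γ⁻¹ ^ j * log ((γ ^ j - 1) / (γ - 1)) := by
  have hγ0 : 0 < γ := one_pos.trans hγ
  have hlog := log_le_log (iteratedBound_pos hγ hβ hu t k) h
  rw [log_iteratedBound hγ hβ hu] at hlog
  have hdiv : log u - (1 - γ⁻¹ ^ k) / (γ - 1) * (log (2 * β) - β * t)
      - ∑ j ∈ Icc 2 k, γ⁻¹ ^ j * log ((γ ^ j - 1) / (γ - 1)) ≤ γ⁻¹ ^ k * log M := by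
    refine le_of_mul_le_mul_left ?_ (pow_pos hγ0 k)
    rwa [← mul_assoc, ← mul_pow, mul_inv_cancel₀ hγ0.ne', one_pow, one_mul]
  have hpartial := (summable_inv_pow_mul_log_geom_quot hγ).sum_le_tsum (Icc 2 k)
    fun j _ => mul_nonneg (by positivity) (log_geom_quot_nonneg hγ j)
  linarith

end IteratedBound

theorem stmt1_general (γ β M : ℝ) (hγ : 1 < γ) (hβ : 0 < β)
    (g : ℝ → ℝ)
    (hbound : ∀ k : ℕ, 1 ≤ k → ∀ t : ℝ, β⁻¹ * Real.log 2 ≤ t →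
      g t ^ (γ ^ k) * (2 * β) ^ (-((γ ^ k - 1) / (γ - 1)))
        * (∏ j ∈ Finset.Icc 2 k, ((γ ^ j - 1) / (γ - 1)) ^ (-(γ ^ (k - j))))
        * Real.exp (β * t * (γ ^ k - 1) / (γ - 1)) ≤ M) :
    ∃ C : ℝ, ∀ t : ℝ, β⁻¹ * Real.log 2 ≤ t →
      g t ≤ C * Real.exp (-(β * t) / (γ - 1)) := by
  set S := ∑' j : ℕ, γ⁻¹ ^ j * log ((γ ^ j - 1) / (γ - 1))
  refine ⟨exp (log (2 * β) / (γ - 1) + S), fun t ht => ?_⟩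
  rcases le_or_gt (g t) 0 with hg | hg
  · exact hg.trans (by positivity)
  have hr := tendsto_pow_atTop_nhds_zero_of_lt_one (inv_nonneg.2 (one_pos.trans hγ).le)
    (inv_lt_one_of_one_lt₀ hγ)
  have hlim : Tendsto (fun k : ℕ => γ⁻¹ ^ k * log M
      + (1 - γ⁻¹ ^ k) / (γ - 1) * (log (2 * β) - β * t) + S)
      atTop (𝓝 ((log (2 * β) - β * t) / (γ - 1) + S)) := by
    convert ((hr.mul_const (log M)).add (((tendsto_const_nhds.sub hr).div_const (γ - 1)).mul_const
      (log (2 * β) - β * t))).add_const S using 2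
    ring
  have hlog : log (g t) ≤ (log (2 * β) - β * t) / (γ - 1) + S :=
    ge_of_tendsto hlim (eventually_atTop.2
      ⟨1, fun k hk => log_le_of_iteratedBound_le hγ hβ hg (hbound k hk t ht)⟩)
  calc g t = exp (log (g t)) := (exp_log hg).symm
    _ ≤ exp ((log (2 * β) - β * t) / (γ - 1) + S) := exp_le_exp.2 hlog
    _ = exp (log (2 * β) / (γ - 1) + S) * exp (-(β * t) / (γ - 1)) := by
      rw [← exp_add]
      ring_nf

theorem stmt1 (γ β M : ℝ) (hγ : 1 < γ) (hβ : 0 < β)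
    (g : ℝ → ℝ) (hg : ∀ t, 0 ≤ g t)
    (hbound : ∀ k : ℕ, 1 ≤ k → ∀ t : ℝ, β⁻¹ * Real.log 2 ≤ t →
      g t ^ (γ ^ k) * (2 * β) ^ (-((γ ^ k - 1) / (γ - 1)))
        * (∏ j ∈ Finset.Icc 2 k, ((γ ^ j - 1) / (γ - 1)) ^ (-(γ ^ (k - j))))
        * Real.exp (β * t * (γ ^ k - 1) / (γ - 1)) ≤ M) :
    ∃ C : ℝ, ∀ t : ℝ, β⁻¹ * Real.log 2 ≤ t →
      g t ≤ C * Real.exp (-(β * t) / (γ - 1)) :=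
  stmt1_general γ β M hγ hβ g hbound
end

section
/- For all σ ∈ (0,1), n ≥ 1, and 0 < r < 1, the integral ∫_0^1 t (t^{1/(2σ)} + r)^{-(n+2σ)} dt is comparable to r^{-(n−2σ)}, with implied constants depending only on n and σ (assuming n > 2σ). -/
/-! Write `a = 2σ`, `m = n` and `s = r^a`. On `(0, s]` the base `t^(1/a) + r` lies between `r`
and `2r`, so that piece of the integral is `≍ s² r^(-(m+a)) = r^(-(m-a))`. On `[s, 1]` the base
is at least `t^(1/a)`, so the integrand is at most `t^(-m/a)`, whose integral over `(s, ∞)` is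
`a/(m-a) · s^(-(m-a)/a) = a/(m-a) · r^(-(m-a))`; this tail converges exactly because `m > a`. -/

open Real MeasureTheory Set

section
variable {a e m p r t : ℝ}

theorem continuousOn_mul_rpow_add_rpow (he : 0 < e) (hr : 0 < r) (p : ℝ) :
    ContinuousOn (fun t : ℝ => t * (t ^ e + r) ^ p) (Ici 0) := by
  intro t ht
  have hbase : 0 < t ^ e + r := by
    have := rpow_nonneg (mem_Ici.1 ht) e
    linarith
  have hpow : ContinuousAt (fun x : ℝ => (x ^ e + r) ^ p) t :=
    ((continuousAt_rpow_const t e (Or.inr he.le)).add continuousAt_const).rpow_const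
      (Or.inl hbase.ne')
  exact (continuousAt_id.mul hpow).continuousWithinAt

theorem integrableOn_Ioc_mul_rpow_add_rpow (he : 0 < e) (hr : 0 < r) (p b : ℝ) :
    IntegrableOn (fun t : ℝ => t * (t ^ e + r) ^ p) (Ioc 0 b) :=
  (((continuousOn_mul_rpow_add_rpow he hr p).mono Icc_subset_Ici_self).integrableOn_Icc).mono_set
    Ioc_subset_Icc_self

theorem mul_rpow_add_le_mul_rpow (hp : 0 ≤ p) (hr : 0 < r) (ht : 0 ≤ t) :
    t * (t ^ e + r) ^ (-p) ≤ t * r ^ (-p) :=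
  mul_le_mul_of_nonneg_left
    (rpow_le_rpow_of_nonpos hr (le_add_of_nonneg_left (rpow_nonneg ht e)) (neg_nonpos.2 hp)) ht

theorem mul_rpow_two_mul_le_mul_rpow_add (ha : 0 < a) (hp : 0 ≤ p) (hr : 0 < r) (ht : 0 ≤ t)
    (hta : t ≤ r ^ a) : t * (2 * r) ^ (-p) ≤ t * (t ^ (1 / a) + r) ^ (-p) := by
  have hroot : t ^ (1 / a) ≤ r := by
    calc t ^ (1 / a) ≤ (r ^ a) ^ (1 / a) := rpow_le_rpow ht hta (by positivity)
      _ = r := by rw [← rpow_mul hr.le, mul_one_div_cancel ha.ne', rpow_one]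
  have hbase : 0 < t ^ (1 / a) + r := by positivity
  exact mul_le_mul_of_nonneg_left
    (rpow_le_rpow_of_nonpos hbase (by linarith) (neg_nonpos.2 hp)) ht

theorem mul_rpow_add_le_rpow (hp : 0 ≤ p) (hr : 0 ≤ r) (ht : 0 < t) :
    t * (t ^ (1 / a) + r) ^ (-p) ≤ t ^ (1 - p / a) := by
  have hroot : 0 < t ^ (1 / a) := rpow_pos_of_pos ht _
  calc t * (t ^ (1 / a) + r) ^ (-p) ≤ t * (t ^ (1 / a)) ^ (-p) :=
        mul_le_mul_of_nonneg_left
          (rpow_le_rpow_of_nonpos hroot (le_add_of_nonneg_right hr) (neg_nonpos.2 hp)) ht.le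
    _ = t ^ (1 - p / a) := by
        rw [← rpow_mul ht.le, sub_eq_add_neg, rpow_add ht, rpow_one]
        ring_nf

theorem setIntegral_Ioc_zero_mul_const {s : ℝ} (hs : 0 ≤ s) (c : ℝ) :
    ∫ t in Ioc 0 s, t * c = s ^ 2 / 2 * c := by
  rw [← intervalIntegral.integral_of_le hs, intervalIntegral.integral_mul_const, integral_id]
  ring

theorem rpow_sq_mul_rpow_neg_add (hr : 0 < r) :
    (r ^ a) ^ 2 * r ^ (-(m + a)) = r ^ (-(m - a)) := by
  rw [← rpow_natCast, ← rpow_mul hr.le, ← rpow_add hr]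
  ring_nf

theorem le_setIntegral_mul_rpow_add_rpow (ha : 0 < a) (hma : 0 ≤ m + a) (hr : 0 < r)
    (hr1 : r ≤ 1) :
    2 ^ (-(m + a)) / 2 * r ^ (-(m - a)) ≤
      ∫ t in Ioc 0 1, t * (t ^ (1 / a) + r) ^ (-(m + a)) := by
  set s := r ^ a
  have hs0 : 0 < s := rpow_pos_of_pos hr a
  have hs1 : s ≤ 1 := rpow_le_one hr.le hr1 ha.le
  have hint := integrableOn_Ioc_mul_rpow_add_rpow (one_div_pos.2 ha) hr (-(m + a))
  calc 2 ^ (-(m + a)) / 2 * r ^ (-(m - a)) = ∫ t in Ioc 0 s, t * (2 * r) ^ (-(m + a)) := by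
        rw [setIntegral_Ioc_zero_mul_const hs0.le, mul_rpow zero_le_two hr.le,
          ← rpow_sq_mul_rpow_neg_add hr]
        ring
    _ ≤ ∫ t in Ioc 0 s, t * (t ^ (1 / a) + r) ^ (-(m + a)) :=
        setIntegral_mono_on (continuous_id.mul continuous_const).integrableOn_Ioc (hint s)
          measurableSet_Ioc fun t ht =>
            mul_rpow_two_mul_le_mul_rpow_add ha hma hr ht.1.le ht.2
    _ ≤ ∫ t in Ioc 0 1, t * (t ^ (1 / a) + r) ^ (-(m + a)) := by
        refine setIntegral_mono_set (hint 1) ?_ (Ioc_subset_Ioc le_rfl hs1).eventuallyLE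
        refine (ae_restrict_iff' measurableSet_Ioc).2 (Filter.Eventually.of_forall fun t ht => ?_)
        have := rpow_nonneg ht.1.le (1 / a)
        exact mul_nonneg ht.1.le (rpow_nonneg (by linarith) _)

theorem setIntegral_mul_rpow_add_rpow_le (ha : 0 < a) (hma : a < m) (hr : 0 < r) (hr1 : r ≤ 1) :
    ∫ t in Ioc 0 1, t * (t ^ (1 / a) + r) ^ (-(m + a)) ≤
      (1 / 2 + a / (m - a)) * r ^ (-(m - a)) := by
  set s := r ^ a
  have hs0 : 0 < s := rpow_pos_of_pos hr a
  have hs1 : s ≤ 1 := rpow_le_one hr.le hr1 ha.le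
  have hint := integrableOn_Ioc_mul_rpow_add_rpow (one_div_pos.2 ha) hr (-(m + a))
  have hp : 0 ≤ m + a := by linarith
  set c := 1 - (m + a) / a
  have hc : c + 1 = -((m - a) / a) := by simp only [c]; field_simp; ring
  have hc1 : c < -1 := by
    have : 0 < (m - a) / a := div_pos (by linarith) ha
    linarith
  have hnear : ∫ t in Ioc 0 s, t * (t ^ (1 / a) + r) ^ (-(m + a)) ≤ 1 / 2 * r ^ (-(m - a)) :=
    calc ∫ t in Ioc 0 s, t * (t ^ (1 / a) + r) ^ (-(m + a))
        ≤ ∫ t in Ioc 0 s, t * r ^ (-(m + a)) :=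
          setIntegral_mono_on (hint s) (continuous_id.mul continuous_const).integrableOn_Ioc
            measurableSet_Ioc fun t ht => mul_rpow_add_le_mul_rpow hp hr ht.1.le
      _ = 1 / 2 * r ^ (-(m - a)) := by
          rw [setIntegral_Ioc_zero_mul_const hs0.le, ← rpow_sq_mul_rpow_neg_add hr]
          ring
  have hfar : ∫ t in Ioc s 1, t * (t ^ (1 / a) + r) ^ (-(m + a)) ≤ a / (m - a) * r ^ (-(m - a)) :=
    calc ∫ t in Ioc s 1, t * (t ^ (1 / a) + r) ^ (-(m + a))
        ≤ ∫ t in Ioc s 1, t ^ c :=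
          setIntegral_mono_on ((hint 1).mono_set (Ioc_subset_Ioc hs0.le le_rfl))
            ((integrableOn_Ioi_rpow_of_lt hc1 hs0).mono_set Ioc_subset_Ioi_self)
            measurableSet_Ioc fun t ht => mul_rpow_add_le_rpow hp hr.le (hs0.trans ht.1)
      _ ≤ ∫ t in Ioi s, t ^ c := by
          refine setIntegral_mono_set (integrableOn_Ioi_rpow_of_lt hc1 hs0) ?_
            Ioc_subset_Ioi_self.eventuallyLE
          refine (ae_restrict_iff' measurableSet_Ioi).2 (Filter.Eventually.of_forall fun t ht => ?_)
          exact rpow_nonneg (hs0.trans ht).le c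
      _ = a / (m - a) * r ^ (-(m - a)) := by
          rw [integral_Ioi_rpow_of_lt hc1 hs0, hc, ← rpow_mul hr.le]
          field_simp
  rw [← Ioc_union_Ioc_eq_Ioc hs0.le hs1, setIntegral_union (Ioc_disjoint_Ioc_of_le le_rfl)
    measurableSet_Ioc (hint s) ((hint 1).mono_set (Ioc_subset_Ioc hs0.le le_rfl))]
  linarith

end

theorem stmt9_general (n : ℕ) (σ : ℝ) (hσ : 0 < σ)
    (hnσ : 2 * σ < (n : ℝ)) :
    ∃ C > 0, ∀ r : ℝ, 0 < r → r < 1 →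
      C⁻¹ * r ^ (-((n : ℝ) - 2 * σ)) ≤
        (∫ t in Set.Ioc (0:ℝ) 1, t * (t ^ (1 / (2 * σ)) + r) ^ (-((n : ℝ) + 2 * σ))) ∧
      (∫ t in Set.Ioc (0:ℝ) 1, t * (t ^ (1 / (2 * σ)) + r) ^ (-((n : ℝ) + 2 * σ))) ≤
        C * r ^ (-((n : ℝ) - 2 * σ)) := by
  have ha : 0 < 2 * σ := by linarith
  set A : ℝ := 1 / 2 + 2 * σ / (n - 2 * σ)
  set B : ℝ := 2 ^ (-((n : ℝ) + 2 * σ)) / 2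
  have hA : 0 < A := by
    have : 0 < (n : ℝ) - 2 * σ := by linarith
    positivity
  have hB : 0 < B := by positivity
  refine ⟨A + B⁻¹, by positivity, fun r hr hr1 => ⟨?_, ?_⟩⟩
  · calc (A + B⁻¹)⁻¹ * r ^ (-((n : ℝ) - 2 * σ)) ≤ B * r ^ (-((n : ℝ) - 2 * σ)) := by
          gcongr
          exact (inv_le_comm₀ (by positivity) hB).2 (le_add_of_nonneg_left hA.le)
      _ ≤ _ := le_setIntegral_mul_rpow_add_rpow ha (by positivity) hr hr1.le
  · calc _ ≤ A * r ^ (-((n : ℝ) - 2 * σ)) := setIntegral_mul_rpow_add_rpow_le ha hnσ hr hr1.le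
      _ ≤ (A + B⁻¹) * r ^ (-((n : ℝ) - 2 * σ)) := by gcongr; linarith [inv_pos.2 hB]

theorem stmt9 (n : ℕ) (σ : ℝ) (hn : 1 ≤ n) (hσ : 0 < σ) (hσ1 : σ < 1)
    (hnσ : 2 * σ < (n : ℝ)) :
    ∃ C > 0, ∀ r : ℝ, 0 < r → r < 1 →
      C⁻¹ * r ^ (-((n : ℝ) - 2 * σ)) ≤
        (∫ t in Set.Ioc (0:ℝ) 1, t * (t ^ (1 / (2 * σ)) + r) ^ (-((n : ℝ) + 2 * σ))) ∧
      (∫ t in Set.Ioc (0:ℝ) 1, t * (t ^ (1 / (2 * σ)) + r) ^ (-((n : ℝ) + 2 * σ))) ≤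
        C * r ^ (-((n : ℝ) - 2 * σ)) :=
  stmt9_general n σ hσ hnσ
end

section
/- For all σ ∈ (0,1), n > 2σ, and 0 < r < 1: ∫_0^1 t (t^{1/(2σ)}+r)^{-(n+2σ)} dt + ∫_0^{r^{2σ}} t·r·(t^{1/(2σ)}+r)^{-(n+2σ+1)} dt + ∫_{r^{2σ}}^1 t^{-(n+1)/(2σ)} dt ≤ C r^{-(n+1−2σ)} for a constant C depending only on n, σ. -/
open Real MeasureTheory

lemma aux_add_rpow (a b p q : ℝ) (ha : 0 < a) (hb : 0 < b) (hp : 0 ≤ p) (hq : 0 ≤ q) :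
    (a + b) ^ (-(p + q)) ≤ a ^ (-p) * b ^ (-q) := by
  rw [Real.rpow_neg (by positivity), Real.rpow_neg ha.le, Real.rpow_neg hb.le, ← mul_inv]
  gcongr
  rw [Real.rpow_add (by positivity)]
  have h1 : a ^ p ≤ (a + b) ^ p := Real.rpow_le_rpow ha.le (by linarith) hp
  have h2 : b ^ q ≤ (a + b) ^ q := Real.rpow_le_rpow hb.le (by linarith) hq
  exact mul_le_mul h1 h2 (Real.rpow_nonneg hb.le q) (Real.rpow_nonneg (by linarith) p)

lemma aux_int_val : (∫ t in Set.Ioc (0:ℝ) 1, t ^ (-(1:ℝ)/2)) = 2 := by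
  rw [← intervalIntegral.integral_of_le zero_le_one,
    integral_rpow (Or.inl (by norm_num))]
  rw [Real.one_rpow, Real.zero_rpow (by norm_num)]
  norm_num

theorem stmt10 (n : ℕ) (σ : ℝ) (hσ : 0 < σ) (hσ1 : σ < 1) (hnσ : 2 * σ < (n : ℝ)) :
    ∃ C > 0, ∀ r : ℝ, 0 < r → r < 1 →
      (∫ t in Set.Ioc (0:ℝ) 1, t * (t ^ (1 / (2 * σ)) + r) ^ (-((n : ℝ) + 2 * σ))) +
      (∫ t in Set.Ioc (0:ℝ) (r ^ (2 * σ)),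
          t * r * (t ^ (1 / (2 * σ)) + r) ^ (-((n : ℝ) + 2 * σ + 1))) +
      (∫ t in Set.Ioc (r ^ (2 * σ)) 1, t ^ (-((n : ℝ) + 1) / (2 * σ)))
        ≤ C * r ^ (-((n : ℝ) + 1 - 2 * σ)) := by
  have hσ0 : σ ≠ 0 := ne_of_gt hσ
  have hnσ' : σ < (n : ℝ) := by linarith
  set α : ℝ := ((n : ℝ) + 1) / (2 * σ) with hα
  have hα1 : 1 < α := by
    rw [hα, lt_div_iff₀ (by linarith : (0:ℝ) < 2 * σ)]; linarith
  have hα0 : 0 < α - 1 := by linarith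
  refine ⟨4 + 1 / (α - 1), by have := one_div_pos.mpr hα0; linarith, ?_⟩
  intro r hr0 hr1
  have hrσ1 : r ^ (2 * σ) ≤ 1 := Real.rpow_le_one hr0.le hr1.le (by positivity)
  have hb0 : 0 < r ^ (2 * σ) := Real.rpow_pos_of_pos hr0 _
  -- the dominating function
  have hg1 : IntegrableOn (fun t : ℝ => t ^ (-(1:ℝ)/2)) (Set.Ioc (0:ℝ) 1) :=
    (intervalIntegral.intervalIntegrable_rpow' (by norm_num)).1
  have hg1' : IntegrableOn (fun t : ℝ => r ^ (-((n : ℝ) - σ)) * t ^ (-(1:ℝ)/2))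
      (Set.Ioc (0:ℝ) 1) := hg1.const_mul _
  have hgval : (∫ t in Set.Ioc (0:ℝ) 1, r ^ (-((n : ℝ) - σ)) * t ^ (-(1:ℝ)/2))
      = r ^ (-((n : ℝ) - σ)) * 2 := by
    rw [MeasureTheory.integral_const_mul, aux_int_val]
  have hgnonneg : 0 ≤ᵐ[volume.restrict (Set.Ioc (0:ℝ) 1)]
      (fun t : ℝ => r ^ (-((n : ℝ) - σ)) * t ^ (-(1:ℝ)/2)) := by
    filter_upwards [ae_restrict_mem measurableSet_Ioc] with t ht
    exact mul_nonneg (Real.rpow_nonneg hr0.le _) (Real.rpow_nonneg ht.1.le _)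
  -- first integral
  have hI1 : (∫ t in Set.Ioc (0:ℝ) 1, t * (t ^ (1 / (2 * σ)) + r) ^ (-((n : ℝ) + 2 * σ)))
      ≤ r ^ (-((n : ℝ) - σ)) * 2 := by
    rw [← hgval]
    refine integral_mono_of_nonneg ?_ hg1' ?_
    · filter_upwards [ae_restrict_mem measurableSet_Ioc] with t ht
      exact mul_nonneg ht.1.le
        (Real.rpow_nonneg (add_nonneg (Real.rpow_nonneg ht.1.le _) hr0.le) _)
    · filter_upwards [ae_restrict_mem measurableSet_Ioc] with t ht
      have ht0 : 0 < t := ht.1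
      have ha : 0 < t ^ (1 / (2 * σ)) := Real.rpow_pos_of_pos ht0 _
      have hA : (t ^ (1 / (2 * σ))) ^ (-(3 * σ)) = t ^ (-(3:ℝ)/2) := by
        rw [← Real.rpow_mul ht0.le]
        congr 1
        field_simp
      have htt : t * t ^ (-(3:ℝ)/2) = t ^ (-(1:ℝ)/2) := by
        rw [show -(1:ℝ)/2 = 1 + -(3:ℝ)/2 by norm_num, Real.rpow_add ht0, Real.rpow_one]
      calc t * (t ^ (1 / (2 * σ)) + r) ^ (-((n : ℝ) + 2 * σ))
          ≤ t * ((t ^ (1 / (2 * σ))) ^ (-(3 * σ)) * r ^ (-((n : ℝ) - σ))) := by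
            rw [show -((n : ℝ) + 2 * σ) = -(3 * σ + ((n : ℝ) - σ)) by ring]
            exact mul_le_mul_of_nonneg_left
              (aux_add_rpow _ _ _ _ ha hr0 (by linarith) (by linarith)) ht0.le
        _ = r ^ (-((n : ℝ) - σ)) * t ^ (-(1:ℝ)/2) := by
            rw [hA, ← htt]; ring
  -- second integral
  have hI2 : (∫ t in Set.Ioc (0:ℝ) (r ^ (2 * σ)),
      t * r * (t ^ (1 / (2 * σ)) + r) ^ (-((n : ℝ) + 2 * σ + 1)))
      ≤ r ^ (-((n : ℝ) - σ)) * 2 := by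
    have hsub : Set.Ioc (0:ℝ) (r ^ (2 * σ)) ⊆ Set.Ioc (0:ℝ) 1 :=
      Set.Ioc_subset_Ioc_right hrσ1
    calc (∫ t in Set.Ioc (0:ℝ) (r ^ (2 * σ)),
        t * r * (t ^ (1 / (2 * σ)) + r) ^ (-((n : ℝ) + 2 * σ + 1)))
        ≤ ∫ t in Set.Ioc (0:ℝ) (r ^ (2 * σ)),
            r ^ (-((n : ℝ) - σ)) * t ^ (-(1:ℝ)/2) := by
          refine integral_mono_of_nonneg ?_ (hg1'.mono_set hsub) ?_
          · filter_upwards [ae_restrict_mem measurableSet_Ioc] with t ht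
            exact mul_nonneg (mul_nonneg ht.1.le hr0.le)
              (Real.rpow_nonneg (add_nonneg (Real.rpow_nonneg ht.1.le _) hr0.le) _)
          · filter_upwards [ae_restrict_mem measurableSet_Ioc] with t ht
            have ht0 : 0 < t := ht.1
            have ha : 0 < t ^ (1 / (2 * σ)) := Real.rpow_pos_of_pos ht0 _
            have hA : (t ^ (1 / (2 * σ))) ^ (-(3 * σ)) = t ^ (-(3:ℝ)/2) := by
              rw [← Real.rpow_mul ht0.le]
              congr 1
              field_simp
            have htt : t * t ^ (-(3:ℝ)/2) = t ^ (-(1:ℝ)/2) := by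
              rw [show -(1:ℝ)/2 = 1 + -(3:ℝ)/2 by norm_num, Real.rpow_add ht0,
                Real.rpow_one]
            have hrr : r * r ^ (-((n : ℝ) + 1 - σ)) = r ^ (-((n : ℝ) - σ)) := by
              rw [show -((n : ℝ) - σ) = 1 + -((n : ℝ) + 1 - σ) by ring,
                Real.rpow_add hr0, Real.rpow_one]
            calc t * r * (t ^ (1 / (2 * σ)) + r) ^ (-((n : ℝ) + 2 * σ + 1))
                ≤ t * r * ((t ^ (1 / (2 * σ))) ^ (-(3 * σ)) * r ^ (-((n : ℝ) + 1 - σ))) := by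
                  rw [show -((n : ℝ) + 2 * σ + 1) = -(3 * σ + ((n : ℝ) + 1 - σ)) by ring]
                  exact mul_le_mul_of_nonneg_left
                    (aux_add_rpow _ _ _ _ ha hr0 (by linarith) (by linarith))
                    (mul_nonneg ht0.le hr0.le)
              _ = r ^ (-((n : ℝ) - σ)) * t ^ (-(1:ℝ)/2) := by
                  rw [hA, ← htt, ← hrr]; ring
      _ ≤ ∫ t in Set.Ioc (0:ℝ) 1, r ^ (-((n : ℝ) - σ)) * t ^ (-(1:ℝ)/2) :=
          setIntegral_mono_set hg1' hgnonneg (HasSubset.Subset.eventuallyLE hsub)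
      _ = r ^ (-((n : ℝ) - σ)) * 2 := hgval
  -- third integral
  have hI3 : (∫ t in Set.Ioc (r ^ (2 * σ)) 1, t ^ (-((n : ℝ) + 1) / (2 * σ)))
      ≤ (1 / (α - 1)) * r ^ (-((n : ℝ) + 1 - 2 * σ)) := by
    have heq : -((n : ℝ) + 1) / (2 * σ) = -α := by rw [hα, neg_div]
    have hαne : -α ≠ -1 := by intro h; nlinarith [neg_injective h]
    rw [heq, ← intervalIntegral.integral_of_le hrσ1,
      integral_rpow (Or.inr ⟨hαne, Set.notMem_uIcc_of_lt hb0 one_pos⟩), Real.one_rpow]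
    have hb' : (r ^ (2 * σ)) ^ (-α + 1) = r ^ (-((n : ℝ) + 1 - 2 * σ)) := by
      rw [← Real.rpow_mul hr0.le]
      congr 1
      rw [hα]
      field_simp
      ring
    rw [hb']
    have hrw : (1 - r ^ (-((n : ℝ) + 1 - 2 * σ))) / (-α + 1)
        = (r ^ (-((n : ℝ) + 1 - 2 * σ)) - 1) / (α - 1) := by
      rw [show -α + 1 = -(α - 1) by ring, div_neg]
      ring
    rw [hrw]
    calc (r ^ (-((n : ℝ) + 1 - 2 * σ)) - 1) / (α - 1)
        ≤ r ^ (-((n : ℝ) + 1 - 2 * σ)) / (α - 1) := by gcongr <;> linarith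
      _ = (1 / (α - 1)) * r ^ (-((n : ℝ) + 1 - 2 * σ)) := by ring
  have hmono : r ^ (-((n : ℝ) - σ)) ≤ r ^ (-((n : ℝ) + 1 - 2 * σ)) :=
    Real.rpow_le_rpow_of_exponent_ge hr0 hr1.le (by linarith)
  linarith [hI1, hI2, hI3, hmono]
end

section
/- Let μ be a σ-finite measure, γ > 1, and u, w measurable with u ∈ L^{γ+1}(μ), w ∈ L^{γ+1}(μ). Then ‖ |u|^{γ−1}u − |w|^{γ−1}w ‖_{(γ+1)/γ} ≤ C (‖u‖_{γ+1}^{γ−1} + ‖w‖_{γ+1}^{γ−1}) ‖u − w‖_{γ+1} for a constant C depending only on γ. -/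
/-!
By the mean value theorem, `f(x) = |x|^(γ-1) x` satisfies
`|f b - f a| ≤ γ (|a|^(γ-1) + |b|^(γ-1)) |b - a|`, since `f' = γ |x|^(γ-1)`. Hölder's
inequality with `γ/(γ+1) = (γ-1)/(γ+1) + 1/(γ+1)` then bounds the `L^((γ+1)/γ)` norm of
`f ∘ u - f ∘ w` by `γ ‖|u|^(γ-1) + |w|^(γ-1)‖_((γ+1)/(γ-1)) ‖u - w‖_(γ+1)`, and
`‖|u|^(γ-1)‖_((γ+1)/(γ-1)) = ‖u‖_(γ+1)^(γ-1)`. The constant is `C = γ`.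
-/

open MeasureTheory Set Filter Topology
open scoped ENNReal

theorem hasDerivAt_abs_rpow_mul_self {γ : ℝ} (hγ : 1 < γ) (x : ℝ) :
    HasDerivAt (fun y : ℝ => |y| ^ (γ - 1) * y) (γ * |x| ^ (γ - 1)) x := by
  rcases eq_or_ne x 0 with rfl | hx
  · -- the slope at `0` is `|y| ^ (γ - 1)`, which tends to `0`
    have hslope : Tendsto (fun y : ℝ => |y| ^ (γ - 1)) (𝓝[≠] 0) (𝓝 0) := by
      have := ((continuous_abs.rpow_const fun _ => Or.inr (sub_pos.2 hγ).le).tendsto 0)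
      simpa [Real.zero_rpow (sub_pos.2 hγ).ne'] using this.mono_left nhdsWithin_le_nhds
    rw [hasDerivAt_iff_tendsto_slope]
    simp only [abs_zero, Real.zero_rpow (sub_pos.2 hγ).ne', mul_zero]
    refine hslope.congr' ?_
    filter_upwards [self_mem_nhdsWithin] with y (hy : y ≠ 0)
    rw [slope_def_field]
    field_simp
    simp
  · have hxa : |x| ≠ 0 := abs_ne_zero.2 hx
    refine (((hasDerivAt_abs hx).rpow_const (Or.inl hxa)).mul (hasDerivAt_id x)).congr_deriv ?_
    rw [id_eq, mul_one, Real.rpow_sub_one hxa]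
    field_simp
    linear_combination (γ - 1) * sign_mul_self x

theorem abs_rpow_le_add_of_mem_segment {s a b x : ℝ} (hs : 0 ≤ s) (hx : x ∈ segment ℝ a b) :
    |x| ^ s ≤ |a| ^ s + |b| ^ s := by
  rw [segment_eq_uIcc] at hx
  have hmax : |x| ≤ max |a| |b| := by
    rcases le_total a b with hab | hab
    · rw [uIcc_of_le hab] at hx
      exact abs_le_max_abs_abs hx.1 hx.2
    · rw [uIcc_of_ge hab] at hx
      exact max_comm |a| |b| ▸ abs_le_max_abs_abs hx.1 hx.2
  calc |x| ^ s ≤ max |a| |b| ^ s := by gcongr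
    _ ≤ |a| ^ s + |b| ^ s := by
      rcases max_cases |a| |b| with ⟨h, _⟩ | ⟨h, _⟩ <;> rw [h] <;> simp [Real.rpow_nonneg]

theorem abs_abs_rpow_mul_self_sub_le {γ : ℝ} (hγ : 1 < γ) (a b : ℝ) :
    |(|b| ^ (γ - 1) * b - |a| ^ (γ - 1) * a)| ≤
      γ * (|a| ^ (γ - 1) + |b| ^ (γ - 1)) * |b - a| := by
  refine (convex_segment a b).norm_image_sub_le_of_norm_hasDerivWithin_le
    (fun x _ => (hasDerivAt_abs_rpow_mul_self hγ x).hasDerivWithinAt) (fun x hx => ?_)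
    (left_mem_segment ℝ a b) (right_mem_segment ℝ a b)
  rw [Real.norm_eq_abs, abs_mul, abs_of_pos (by linarith), abs_of_nonneg (by positivity)]
  gcongr
  exact abs_rpow_le_add_of_mem_segment (sub_pos.2 hγ).le hx

section
variable {α : Type*} [MeasurableSpace α] {μ : Measure α}

theorem eLpNorm_abs_rpow {s p : ℝ} (hs : 0 < s) (hp : 0 ≤ p) (u : α → ℝ) :
    eLpNorm (fun x => |u x| ^ s) (ENNReal.ofReal (p / s)) μ =
      eLpNorm u (ENNReal.ofReal p) μ ^ s := by
  have h := eLpNorm_norm_rpow (p := ENNReal.ofReal (p / s)) (μ := μ) u hs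
  rwa [← ENNReal.ofReal_mul (div_nonneg hp hs.le), div_mul_cancel₀ p hs.ne'] at h

theorem eLpNorm_abs_rpow_add_abs_rpow_le {s p : ℝ} (hs : 0 < s) (hsp : s ≤ p) {u w : α → ℝ}
    (hu : AEStronglyMeasurable u μ) (hw : AEStronglyMeasurable w μ) :
    eLpNorm (fun x => |u x| ^ s + |w x| ^ s) (ENNReal.ofReal (p / s)) μ ≤
      eLpNorm u (ENNReal.ofReal p) μ ^ s + eLpNorm w (ENNReal.ofReal p) μ ^ s := by
  have hcont : Continuous fun t : ℝ => |t| ^ s := continuous_abs.rpow_const fun _ => Or.inr hs.le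
  rw [← eLpNorm_abs_rpow hs (hs.le.trans hsp), ← eLpNorm_abs_rpow hs (hs.le.trans hsp)]
  exact eLpNorm_add_le (hcont.comp_aestronglyMeasurable hu) (hcont.comp_aestronglyMeasurable hw)
    (ENNReal.one_le_ofReal.2 ((one_le_div hs).2 hsp))

theorem eLpNorm_abs_rpow_mul_self_sub_le {γ : ℝ} (hγ : 1 < γ) {u w : α → ℝ}
    (hu : AEStronglyMeasurable u μ) (hw : AEStronglyMeasurable w μ) :
    eLpNorm (fun x => |u x| ^ (γ - 1) * u x - |w x| ^ (γ - 1) * w x)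
        (ENNReal.ofReal ((γ + 1) / γ)) μ ≤
      ENNReal.ofReal γ * (eLpNorm u (ENNReal.ofReal (γ + 1)) μ ^ (γ - 1) +
        eLpNorm w (ENNReal.ofReal (γ + 1)) μ ^ (γ - 1)) *
        eLpNorm (u - w) (ENNReal.ofReal (γ + 1)) μ := by
  have hγ₀ : 0 < γ := by linarith
  have hγ₁ : 0 < γ - 1 := by linarith
  have hcont : Continuous fun t : ℝ => |t| ^ (γ - 1) :=
    continuous_abs.rpow_const fun _ => Or.inr hγ₁.le
  set ψ : α → ℝ := fun x => |u x| ^ (γ - 1) + |w x| ^ (γ - 1)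
  have hψ : AEStronglyMeasurable ψ μ :=
    (hcont.comp_aestronglyMeasurable hu).add (hcont.comp_aestronglyMeasurable hw)
  have hpqr : ENNReal.HolderTriple (ENNReal.ofReal ((γ + 1) / (γ - 1))) (ENNReal.ofReal (γ + 1))
      (ENNReal.ofReal ((γ + 1) / γ)) :=
    Real.HolderTriple.ennrealOfReal ⟨by field_simp; ring, by positivity, by positivity⟩
  calc _ ≤ eLpNorm (γ • ψ • (u - w)) (ENNReal.ofReal ((γ + 1) / γ)) μ := by
        refine eLpNorm_mono fun x => ?_
        simpa [ψ, abs_mul, abs_of_pos hγ₀, abs_of_nonneg (by positivity : 0 ≤ ψ x), add_comm,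
          mul_assoc] using abs_abs_rpow_mul_self_sub_le hγ (w x) (u x)
    _ = ENNReal.ofReal γ * eLpNorm (ψ • (u - w)) (ENNReal.ofReal ((γ + 1) / γ)) μ := by
        rw [eLpNorm_const_smul, Real.enorm_of_nonneg hγ₀.le]
    _ ≤ ENNReal.ofReal γ * (eLpNorm ψ (ENNReal.ofReal ((γ + 1) / (γ - 1))) μ *
          eLpNorm (u - w) (ENNReal.ofReal (γ + 1)) μ) := by
        gcongr
        exact eLpNorm_smul_le_mul_eLpNorm (hu.sub hw) hψ
    _ ≤ _ := by
        rw [← mul_assoc]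
        gcongr
        exact eLpNorm_abs_rpow_add_abs_rpow_le hγ₁ (by linarith) hu hw
end

theorem stmt15 (γ : ℝ) (hγ : 1 < γ) :
    ∃ C > 0, ∀ (α : Type) (_ : MeasurableSpace α) (μ : Measure α),
      SigmaFinite μ → ∀ u w : α → ℝ,
      MemLp u (ENNReal.ofReal (γ + 1)) μ →
      MemLp w (ENNReal.ofReal (γ + 1)) μ →
      eLpNorm (fun x => |u x| ^ (γ - 1) * u x - |w x| ^ (γ - 1) * w x)
          (ENNReal.ofReal ((γ + 1) / γ)) μ ≤
        ENNReal.ofReal C *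
          (eLpNorm u (ENNReal.ofReal (γ + 1)) μ ^ (γ - 1) +
            eLpNorm w (ENNReal.ofReal (γ + 1)) μ ^ (γ - 1)) *
          eLpNorm (u - w) (ENNReal.ofReal (γ + 1)) μ :=
  ⟨γ, by linarith, fun _ _ _ _ _ _ hu hw => eLpNorm_abs_rpow_mul_self_sub_le hγ hu.1 hw.1⟩
end

section
/- Let n ≥ 2 and set ρ = (n−1)/2. For the function φ(x) = log(2 + |x|²) on a metric measure space with distance d and basepoint o (|x| = d(x,o)), and for any kernel P : [0,∞) → [0,∞) satisfying P(r) ≤ C (1+r)^{-σ-1} e^{-(n-1)r} for r ≥ 1, the following holds: for each x with |x| ≥ 1, ∫_{d(x,y) ≥ 1, |y| ≥ 2|x|} |log(2+|x|²) − log(2+|y|²)| P(d(x,y)) dμ(y) ≤ C' uniformly in x, provided the measure μ satisfies μ(B(x,r)) ≤ C e^{(n-1)r} for all r ≥ 1. The same uniform bound holds on the regions {|x| ≥ 2|y|} and {|x|/2 ≤ |y| ≤ 2|x|}. -/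
/-!
Since `| |x| - |y| | ≤ d(x,y)`, the numbers `log (2 + |x|²)` and `log (2 + |y|²)` differ by at
most `log (2 + d(x,y)²)`, whatever region `y` lies in. Cutting `{d(x,y) ≥ 1}` into the unit
annuli `k + 1 ≤ d(x,y) < k + 2`, the volume bound `C e^{(n-1)(k+2)}` cancels the decay
`e^{-(n-1)d(x,y)}` of `P` up to the factor `e^{|n-1|}`, so the integral is at most a constant
times `∑ₖ log (2 + (k+2)²) (k+2)^{-σ-1}`, which converges because `σ > 0`.
-/

open Real MeasureTheory

open scoped ENNReal

lemma log_two_add_sq_sub_le {a b d : ℝ} (hb : 0 ≤ b) (h : b ≤ a + d) :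
    log (2 + b ^ 2) - log (2 + a ^ 2) ≤ log (2 + d ^ 2) := by
  have hb2 : b ^ 2 ≤ (a + d) ^ 2 := pow_le_pow_left₀ hb h 2
  rw [sub_le_iff_le_add, ← log_mul (by positivity) (by positivity)]
  exact log_le_log (by positivity)
    (by nlinarith [sq_nonneg (a - d), mul_nonneg (sq_nonneg a) (sq_nonneg d)])

lemma abs_log_two_add_sq_sub_le {a b d : ℝ} (ha : 0 ≤ a) (hb : 0 ≤ b) (h : |a - b| ≤ d) :
    |log (2 + a ^ 2) - log (2 + b ^ 2)| ≤ log (2 + d ^ 2) := by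
  rw [abs_sub_le_iff] at h ⊢
  exact ⟨log_two_add_sq_sub_le ha (by linarith), log_two_add_sq_sub_le hb (by linarith)⟩

lemma log_two_add_sq_le_rpow {t ε : ℝ} (ht : 2 ≤ t) (hε : 0 < ε) :
    log (2 + t ^ 2) ≤ 3 / ε * t ^ ε :=
  calc log (2 + t ^ 2) ≤ log (t ^ 3) := log_le_log (by positivity) (by nlinarith)
    _ = 3 * log t := by rw [log_pow]; norm_num
    _ ≤ 3 * (t ^ ε / ε) := by gcongr; exact log_le_rpow_div (by linarith) hε
    _ = 3 / ε * t ^ ε := by ring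

lemma summable_log_two_add_sq_mul_rpow {σ : ℝ} (hσ : 0 < σ) :
    Summable fun k : ℕ => log (2 + ((k : ℝ) + 2) ^ 2) * ((k : ℝ) + 2) ^ (-σ - 1) := by
  have hpow : Summable fun k : ℕ => ((k : ℝ) + 2) ^ (-σ / 2 - 1) := by
    have hp : -σ / 2 - 1 < -1 := by linarith
    simpa using (summable_nat_add_iff 2).mpr (Real.summable_nat_rpow.mpr hp)
  refine Summable.of_nonneg_of_le (fun k => ?_) (fun k => ?_) (hpow.mul_left (3 / (σ / 2)))
  · exact mul_nonneg (log_nonneg (by nlinarith)) (by positivity)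
  · have ht : (2 : ℝ) ≤ k + 2 := by linarith [k.cast_nonneg (α := ℝ)]
    calc log (2 + ((k : ℝ) + 2) ^ 2) * ((k : ℝ) + 2) ^ (-σ - 1)
        ≤ 3 / (σ / 2) * ((k : ℝ) + 2) ^ (σ / 2) * ((k : ℝ) + 2) ^ (-σ - 1) := by
          gcongr; exact log_two_add_sq_le_rpow ht (by linarith)
      _ = 3 / (σ / 2) * ((k : ℝ) + 2) ^ (-σ / 2 - 1) := by
          rw [mul_assoc, ← rpow_add (by linarith)]; ring_nf

lemma setLIntegral_le_mul_measure_of_forall_le {α : Type*} [MeasurableSpace α] {μ : Measure α}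
    {s : Set α} {g : α → ℝ≥0∞} {c : ℝ≥0∞} (h : ∀ y ∈ s, g y ≤ c) :
    ∫⁻ y in s, g y ∂μ ≤ c * μ s := by
  -- `s` need not be measurable, so `g ≤ c` is only used through a measurable minorant of `g`.
  obtain ⟨φ, hφ, hφg, hφeq⟩ := exists_measurable_le_lintegral_eq (μ.restrict s) g
  have hae : ∀ᵐ y ∂μ.restrict s, φ y ≤ c := by
    simp only [ae_iff, not_le]
    rw [Measure.restrict_apply (measurableSet_lt measurable_const hφ)]
    exact measure_mono_null
      (fun y ⟨hy, hys⟩ => (hy.trans_le ((hφg y).trans (h y hys))).false) measure_empty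
  calc ∫⁻ y in s, g y ∂μ = ∫⁻ y in s, φ y ∂μ := hφeq
    _ ≤ ∫⁻ _ in s, c ∂μ := lintegral_mono_ae hae
    _ = c * μ s := setLIntegral_const s c

lemma setLIntegral_one_le_dist_le_tsum {X : Type*} [PseudoMetricSpace X] [MeasurableSpace X]
    (μ : Measure X) (x : X) {g : X → ℝ≥0∞} {c : ℕ → ℝ≥0∞}
    (hg : ∀ (k : ℕ) (y : X), (k : ℝ) + 1 ≤ dist x y → dist x y < k + 2 → g y ≤ c k) :
    ∫⁻ y in {y | 1 ≤ dist x y}, g y ∂μ ≤ ∑' k : ℕ, c k * μ (Metric.ball x (k + 2)) := by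
  set A : ℕ → Set X := fun k => {y | (k : ℝ) + 1 ≤ dist x y ∧ dist x y < k + 2}
  have hcover : {y | 1 ≤ dist x y} ⊆ ⋃ k, A k := fun y (hy : 1 ≤ dist x y) => by
    have hfloor := Nat.floor_le (by linarith : 0 ≤ dist x y - 1)
    have hlt := Nat.lt_floor_add_one (dist x y - 1)
    exact Set.mem_iUnion.mpr ⟨⌊dist x y - 1⌋₊, by linarith, by linarith⟩
  calc ∫⁻ y in {y | 1 ≤ dist x y}, g y ∂μ
      ≤ ∫⁻ y in ⋃ k, A k, g y ∂μ := lintegral_mono_set hcover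
    _ ≤ ∑' k, ∫⁻ y in A k, g y ∂μ := lintegral_iUnion_le _ _
    _ ≤ ∑' k, c k * μ (A k) :=
        ENNReal.tsum_le_tsum fun k =>
          setLIntegral_le_mul_measure_of_forall_le fun y hy => hg k y hy.1 hy.2
    _ ≤ ∑' k : ℕ, c k * μ (Metric.ball x (k + 2)) := by
        gcongr with k
        exact fun y hy => Metric.mem_ball'.mpr hy.2

lemma log_two_add_sq_mul_kernel_le {P : ℝ → ℝ} {C σ β d t : ℝ} (hσ : 0 ≤ σ) (hC : 0 ≤ C)
    (hP0 : ∀ r, 0 ≤ P r)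
    (hP : ∀ r, 1 ≤ r → P r ≤ C * (1 + r) ^ (-σ - 1) * exp (-β * r))
    (hd : 1 ≤ d) (hdt : d ≤ t) (htd : t ≤ d + 1) :
    log (2 + d ^ 2) * P d ≤ log (2 + t ^ 2) * (C * t ^ (-σ - 1) * (exp |β| * exp (-β * t))) := by
  have hexp : exp (-β * d) ≤ exp |β| * exp (-β * t) := by
    rw [← exp_add]
    gcongr
    nlinarith [le_abs_self β, neg_abs_le β]
  have hlog : 0 ≤ log (2 + t ^ 2) := log_nonneg (by nlinarith)
  refine mul_le_mul (log_le_log (by positivity) (by nlinarith)) ((hP d hd).trans ?_) (hP0 d) hlog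
  have hpow : (1 + d) ^ (-σ - 1) ≤ t ^ (-σ - 1) :=
    rpow_le_rpow_of_nonpos (by linarith) (by linarith) (by linarith)
  have ht : 0 ≤ t ^ (-σ - 1) := rpow_nonneg (by linarith) _
  gcongr

lemma setLIntegral_log_two_add_sq_mul_kernel_le {X : Type*} [PseudoMetricSpace X]
    [MeasurableSpace X] (μ : Measure X) (x : X) {P : ℝ → ℝ} {C σ β : ℝ} (hσ : 0 < σ) (hC : 0 ≤ C)
    (hP0 : ∀ r, 0 ≤ P r) (hP : ∀ r, 1 ≤ r → P r ≤ C * (1 + r) ^ (-σ - 1) * exp (-β * r))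
    (hμ : ∀ r, 1 ≤ r → μ (Metric.ball x r) ≤ ENNReal.ofReal (C * exp (β * r))) :
    ∫⁻ y in {y | 1 ≤ dist x y}, ENNReal.ofReal (log (2 + dist x y ^ 2) * P (dist x y)) ∂μ ≤
      ENNReal.ofReal
        (C ^ 2 * exp |β| * ∑' k : ℕ, log (2 + ((k : ℝ) + 2) ^ 2) * ((k : ℝ) + 2) ^ (-σ - 1)) := by
  set b : ℕ → ℝ := fun k => log (2 + ((k : ℝ) + 2) ^ 2) * ((k : ℝ) + 2) ^ (-σ - 1)
  have hb : ∀ k, 0 ≤ C ^ 2 * exp |β| * b k := fun k =>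
    mul_nonneg (by positivity) (mul_nonneg (log_nonneg (by nlinarith)) (by positivity))
  refine (setLIntegral_one_le_dist_le_tsum μ x fun k y h1 h2 => ENNReal.ofReal_le_ofReal
    (log_two_add_sq_mul_kernel_le hσ.le hC hP0 hP (by linarith [k.cast_nonneg (α := ℝ)]) h2.le
      (by linarith))).trans ?_
  rw [← tsum_mul_left, ENNReal.ofReal_tsum_of_nonneg hb
    ((summable_log_two_add_sq_mul_rpow hσ).mul_left _)]
  refine ENNReal.tsum_le_tsum fun k => ?_
  have hexp : exp (-β * (k + 2)) * exp (β * (k + 2)) = 1 := by rw [← exp_add]; simp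
  calc _ ≤ _ * ENNReal.ofReal (C * exp (β * (k + 2))) := by
        gcongr; exact hμ _ (by linarith [k.cast_nonneg (α := ℝ)])
    _ = ENNReal.ofReal (C ^ 2 * exp |β| * b k) := by
        rw [← ENNReal.ofReal_mul (mul_nonneg (log_nonneg (by nlinarith)) (by positivity))]
        congr 1
        linear_combination (C ^ 2 * exp |β| * b k) * hexp

theorem stmt19_general {X : Type*} [MetricSpace X] [MeasurableSpace X]
    (μ : Measure X) (o : X) (n : ℕ)
    (σ : ℝ) (hσ : 0 < σ)
    (P : ℝ → ℝ) (C : ℝ) (hC : 0 < C)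
    (hP0 : ∀ r, 0 ≤ P r)
    (hP : ∀ r : ℝ, 1 ≤ r → P r ≤ C * (1 + r) ^ (-σ - 1) * Real.exp (-((n : ℝ) - 1) * r))
    (hμ : ∀ (x : X) (r : ℝ), 1 ≤ r →
      μ (Metric.ball x r) ≤ ENNReal.ofReal (C * Real.exp (((n : ℝ) - 1) * r))) :
    ∃ C' > 0, ∀ x : X, 1 ≤ dist x o →
      (∫⁻ y in {y : X | 1 ≤ dist x y ∧ 2 * dist x o ≤ dist y o},
          ENNReal.ofReal
            (|Real.log (2 + dist x o ^ 2) - Real.log (2 + dist y o ^ 2)| * P (dist x y)) ∂μ)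
        ≤ ENNReal.ofReal C' ∧
      (∫⁻ y in {y : X | 1 ≤ dist x y ∧ 2 * dist y o ≤ dist x o},
          ENNReal.ofReal
            (|Real.log (2 + dist x o ^ 2) - Real.log (2 + dist y o ^ 2)| * P (dist x y)) ∂μ)
        ≤ ENNReal.ofReal C' ∧
      (∫⁻ y in {y : X | 1 ≤ dist x y ∧ dist x o / 2 ≤ dist y o ∧ dist y o ≤ 2 * dist x o},
          ENNReal.ofReal
            (|Real.log (2 + dist x o ^ 2) - Real.log (2 + dist y o ^ 2)| * P (dist x y)) ∂μ)
        ≤ ENNReal.ofReal C' := by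
  set K := C ^ 2 * exp |(n : ℝ) - 1| *
    ∑' k : ℕ, log (2 + ((k : ℝ) + 2) ^ 2) * ((k : ℝ) + 2) ^ (-σ - 1)
  have hK : 0 ≤ K := mul_nonneg (by positivity) (tsum_nonneg fun k =>
    mul_nonneg (log_nonneg (by nlinarith)) (by positivity))
  refine ⟨K + 1, by linarith, fun x _ => ?_⟩
  have hfar : ∫⁻ y in {y | 1 ≤ dist x y}, ENNReal.ofReal
      (|log (2 + dist x o ^ 2) - log (2 + dist y o ^ 2)| * P (dist x y)) ∂μ ≤
      ENNReal.ofReal (K + 1) := calc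
    _ ≤ ∫⁻ y in {y | 1 ≤ dist x y}, ENNReal.ofReal (log (2 + dist x y ^ 2) * P (dist x y)) ∂μ :=
        lintegral_mono fun y => ENNReal.ofReal_le_ofReal (mul_le_mul_of_nonneg_right
          (abs_log_two_add_sq_sub_le dist_nonneg dist_nonneg (abs_dist_sub_le x y o)) (hP0 _))
    _ ≤ ENNReal.ofReal K :=
        setLIntegral_log_two_add_sq_mul_kernel_le μ x hσ hC.le hP0 hP (hμ x)
    _ ≤ ENNReal.ofReal (K + 1) := ENNReal.ofReal_le_ofReal (by linarith)
  exact ⟨(lintegral_mono_set fun y hy => hy.1).trans hfar,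
    (lintegral_mono_set fun y hy => hy.1).trans hfar,
    (lintegral_mono_set fun y hy => hy.1).trans hfar⟩

theorem stmt19 {X : Type*} [MetricSpace X] [MeasurableSpace X]
    (μ : Measure X) (o : X) (n : ℕ) (hn : 2 ≤ n)
    (σ : ℝ) (hσ : 0 < σ) (hσ1 : σ < 1)
    (P : ℝ → ℝ) (C : ℝ) (hC : 0 < C)
    (hP0 : ∀ r, 0 ≤ P r)
    (hP : ∀ r : ℝ, 1 ≤ r → P r ≤ C * (1 + r) ^ (-σ - 1) * Real.exp (-((n : ℝ) - 1) * r))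
    (hμ : ∀ (x : X) (r : ℝ), 1 ≤ r →
      μ (Metric.ball x r) ≤ ENNReal.ofReal (C * Real.exp (((n : ℝ) - 1) * r))) :
    ∃ C' > 0, ∀ x : X, 1 ≤ dist x o →
      (∫⁻ y in {y : X | 1 ≤ dist x y ∧ 2 * dist x o ≤ dist y o},
          ENNReal.ofReal
            (|Real.log (2 + dist x o ^ 2) - Real.log (2 + dist y o ^ 2)| * P (dist x y)) ∂μ)
        ≤ ENNReal.ofReal C' ∧
      (∫⁻ y in {y : X | 1 ≤ dist x y ∧ 2 * dist y o ≤ dist x o},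
          ENNReal.ofReal
            (|Real.log (2 + dist x o ^ 2) - Real.log (2 + dist y o ^ 2)| * P (dist x y)) ∂μ)
        ≤ ENNReal.ofReal C' ∧
      (∫⁻ y in {y : X | 1 ≤ dist x y ∧ dist x o / 2 ≤ dist y o ∧ dist y o ≤ 2 * dist x o},
          ENNReal.ofReal
            (|Real.log (2 + dist x o ^ 2) - Real.log (2 + dist y o ^ 2)| * P (dist x y)) ∂μ)
        ≤ ENNReal.ofReal C' :=
  stmt19_general μ o n σ hσ P C hC hP0 hP hμ
end
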